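/- arXiv:1804.02999 — 2 statements merged into one kernel-verified Lean document; each statement's English description precedes it below -/
import Mathlib

section
/- Let $G$ be a perfect group, $N$ a normal subgroup of $G$, and $d\in\mathbb{N}$. Let $S=\Gamma_1(G,N)\leq G^{\mathcal{P}([d])}$. Then for every $k\in\{1,\dots,d+1\}$, the $k$-th term of the lower central series of $S$ equals $\Gamma_k(G,N)$: $\gamma_k(S)=\Gamma_k(G,N)$. -/
/-- The homomorphism `Δ_A : G → G^(𝒫[d])`, where `Δ_A(u)(B) = u` if `A ⊆ B` and `1`
otherwise. Coordinates of the direct power are indexed by `Finset (Fin d)`. -/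
def Delta {G : Type*} [Group G] (d : ℕ) (A : Finset (Fin d)) :
    G →* (Finset (Fin d) → G) where
  toFun u := fun B => if A ⊆ B then u else 1
  map_one' := by funext B; simp
  map_mul' u v := by
    funext B
    by_cases h : A ⊆ B <;> simp [Pi.mul_apply, h]

/-- The left-normed iterated commutator subgroup `[G, ᵐN]`:
`[G, ⁰N] = G` (i.e. `⊤`) and `[G, ᵐ⁺¹N] = [[G, ᵐN], N]`. -/
def iterComm {G : Type*} [Group G] (N : Subgroup G) : ℕ → Subgroup G
  | 0 => ⊤
  | m + 1 => ⁅iterComm N m, N⁆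

/-- The lower central series of a subgroup `N`, as subgroups of the ambient group:
`γ₁(N) = N` is `gammaN N 0`, and `γ_{l+1}(N) = [γ_l(N), N]` is `gammaN N l`. -/
def gammaN {G : Type*} [Group G] (N : Subgroup G) : ℕ → Subgroup G
  | 0 => N
  | l + 1 => ⁅gammaN N l, N⁆

/-- The subgroup `Γ_k(G,N)` of `G^(𝒫[d])`, generated by the `Δ_A([G, ^{|A|}N])` with
`|A| < k` together with the `Δ_A(γ_{|A|}(N))` with `|A| ≥ k`. -/
def GammaSub {G : Type*} [Group G] (d : ℕ) (N : Subgroup G) (k : ℕ) :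
    Subgroup (Finset (Fin d) → G) :=
  ⨆ A : Finset (Fin d),
    if A.card < k then (iterComm N A.card).map (Delta d A)
    else (gammaN N (A.card - 1)).map (Delta d A)

/-!
By induction on `k` it suffices to show `⁅Γ_k, Γ_1⁆ = Γ_{k+1}` for `k ≥ 1`, and the key identity
is `⁅Δ_A u, Δ_B v⁆ = Δ_{A ∪ B} ⁅u, v⁆`. For `≥`, every generator of `Γ_{k+1}` is a commutator of
generators of `Γ_k` and `Γ_1`: split `A = A' ∪ {i}`, or, for `A = ∅`, use that `G = [G, G]`.
For `≤`, the three subgroups lemma gives `[[G, ᵃN], γ_b(N)] ≤ [G, ^{a+b}N]` and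
`[γ_a(N), γ_b(N)] ≤ γ_{a+b}(N)`, which bound the commutators of generators; as these generators
normalize `Γ_{k+1}`, this bounds the whole commutator subgroup.
-/

open Subgroup
open scoped commutatorElement

namespace Subgroup

variable {G : Type*} [Group G]

theorem commutator_commutator_le_of_rotate {H₁ H₂ H₃ M : Subgroup G} [M.Normal]
    (h1 : ⁅⁅H₂, H₃⁆, H₁⁆ ≤ M) (h2 : ⁅⁅H₃, H₁⁆, H₂⁆ ≤ M) : ⁅⁅H₁, H₂⁆, H₃⁆ ≤ M := by
  simp only [← QuotientGroup.ker_mk' M, ← map_eq_bot_iff, map_commutator] at h1 h2 ⊢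
  exact commutator_commutator_eq_bot_of_rotate h1 h2

theorem le_normalizer_iSup {ι : Sort*} {H : ι → Subgroup G} {K : Subgroup G}
    (h : ∀ i, ⁅K, H i⁆ ≤ ⨆ i, H i) : K ≤ normalizer ((⨆ i, H i : Subgroup G) : Set G) := by
  rw [le_normalizer_iff]
  intro g hg x hx
  refine iSup_induction H (C := fun x => g * x * g⁻¹ ∈ ⨆ i, H i) hx (fun i x hx => ?_) (by simp)
    fun x y hx hy => by simpa [mul_assoc] using mul_mem hx hy
  rw [← MulAut.conj_apply, conj_eq_commutatorElement_mul]
  exact mul_mem (commutator_le.mp (h i) g hg x hx) (mem_iSup_of_mem i hx)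

theorem commutator_iSup_le {ι : Sort*} {H : ι → Subgroup G} {K M : Subgroup G}
    (hH : ∀ i, H i ≤ normalizer (M : Set G)) (h : ∀ i, ⁅H i, K⁆ ≤ M) :
    ⁅⨆ i, H i, K⁆ ≤ M := by
  rw [commutator_le]
  intro g hg t ht
  refine (iSup_induction H (C := fun g => g ∈ normalizer (M : Set G) ∧ ⁅g, t⁆ ∈ M) hg
    (fun i x hx => ⟨hH i hx, commutator_le.mp (h i) x hx t ht⟩) (by simp)
    fun x y hx hy => ⟨mul_mem hx.1 hy.1, ?_⟩).2
  rw [commutatorElement_mul_left_eq_conj_mul]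
  exact mul_mem ((mem_normalizer_iff.mp hx.1 _).mp hy.2) hx.2

end Subgroup

section Series

variable {G : Type*} [Group G] (N : Subgroup G)

theorem gammaN_le_iterComm : ∀ l, gammaN N l ≤ iterComm N l
  | 0 => le_top
  | l + 1 => commutator_mono (gammaN_le_iterComm l) le_rfl

variable [N.Normal]

instance iterComm_normal : ∀ m, (iterComm N m).Normal
  | 0 => inferInstanceAs (⊤ : Subgroup G).Normal
  | m + 1 =>
    have := iterComm_normal m
    inferInstanceAs ⁅iterComm N m, N⁆.Normal

instance gammaN_normal : ∀ l, (gammaN N l).Normal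
  | 0 => inferInstanceAs N.Normal
  | l + 1 =>
    have := gammaN_normal l
    inferInstanceAs ⁅gammaN N l, N⁆.Normal

theorem iterComm_antitone : Antitone (iterComm N) :=
  antitone_nat_of_succ_le fun _ => commutator_le_left _ _

theorem gammaN_antitone : Antitone (gammaN N) :=
  antitone_nat_of_succ_le fun _ => commutator_le_left _ _

theorem iterComm_succ_le_gammaN : ∀ l, iterComm N (l + 1) ≤ gammaN N l
  | 0 => commutator_le_right _ _
  | l + 1 => commutator_mono (iterComm_succ_le_gammaN l) le_rfl

theorem commutator_iterComm_gammaN_le :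
    ∀ l a, ⁅iterComm N a, gammaN N l⁆ ≤ iterComm N (a + l + 1)
  | 0, _ => le_rfl
  | l + 1, a => by
    rw [commutator_comm]
    refine commutator_commutator_le_of_rotate ?_ ?_
    · rw [commutator_comm N]
      exact (commutator_iterComm_gammaN_le l (a + 1)).trans_eq (congrArg _ (by omega))
    · exact commutator_mono (commutator_iterComm_gammaN_le l a) le_rfl

theorem commutator_gammaN_gammaN_le :
    ∀ m l, ⁅gammaN N l, gammaN N m⁆ ≤ gammaN N (l + m + 1)
  | 0, _ => le_rfl
  | m + 1, l => by
    rw [commutator_comm]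
    refine commutator_commutator_le_of_rotate ?_ ?_
    · rw [commutator_comm N]
      exact (commutator_gammaN_gammaN_le m (l + 1)).trans_eq (congrArg _ (by omega))
    · exact commutator_mono (commutator_gammaN_gammaN_le m l) le_rfl

end Series

section Coefficients

variable {G : Type*} [Group G] (N : Subgroup G)

def gammaCoeff (k a : ℕ) : Subgroup G :=
  if a < k then iterComm N a else gammaN N (a - 1)

theorem GammaSub_eq_iSup (d k : ℕ) :
    GammaSub d N k = ⨆ A : Finset (Fin d), (gammaCoeff N k A.card).map (Delta d A) := by
  unfold GammaSub gammaCoeff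
  exact iSup_congr fun A => by split_ifs <;> rfl

theorem gammaCoeff_zero {k : ℕ} (hk : 0 < k) : gammaCoeff N k 0 = ⊤ :=
  if_pos hk

theorem gammaCoeff_one_one : gammaCoeff N 1 1 = N :=
  rfl

theorem gammaCoeff_succ_succ {k : ℕ} (hk : 0 < k) (a : ℕ) :
    gammaCoeff N (k + 1) (a + 1) = ⁅gammaCoeff N k a, N⁆ := by
  unfold gammaCoeff
  by_cases ha : a < k
  · rw [if_pos (by omega), if_pos ha, iterComm]
  · obtain ⟨l, rfl⟩ : ∃ l, a = l + 1 := ⟨a - 1, by omega⟩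
    rw [if_neg (by omega), if_neg ha, Nat.add_sub_cancel, Nat.add_sub_cancel, gammaN]

variable [N.Normal]

theorem iterComm_le_gammaCoeff {k : ℕ} (hk : 0 < k) (a : ℕ) : iterComm N a ≤ gammaCoeff N k a := by
  unfold gammaCoeff
  split_ifs with ha
  · exact le_rfl
  · obtain ⟨l, rfl⟩ : ∃ l, a = l + 1 := ⟨a - 1, by omega⟩
    exact iterComm_succ_le_gammaN N l

theorem gammaCoeff_anti_left {k k' : ℕ} (hk : 0 < k) (hkk' : k ≤ k') (a : ℕ) :
    gammaCoeff N k' a ≤ gammaCoeff N k a := by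
  by_cases ha : a < k'
  · rw [gammaCoeff, if_pos ha]
    exact iterComm_le_gammaCoeff N hk a
  · rw [gammaCoeff, gammaCoeff, if_neg ha, if_neg (by omega)]

theorem gammaCoeff_antitone (k : ℕ) : Antitone (gammaCoeff N k) := by
  refine antitone_nat_of_succ_le fun a => ?_
  unfold gammaCoeff
  split_ifs with h₁ h₂
  · exact iterComm_antitone N a.le_succ
  · omega
  · simpa using gammaN_le_iterComm N a
  · exact gammaN_antitone N (by omega)

theorem commutator_gammaCoeff_le {k : ℕ} (hk : 0 < k) (a b : ℕ) :
    ⁅gammaCoeff N k a, gammaCoeff N 1 b⁆ ≤ gammaCoeff N (k + 1) (a + b) := by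
  rcases b with _ | b
  · rw [gammaCoeff_zero N one_pos, Nat.add_zero]
    by_cases ha : a < k
    · rw [gammaCoeff, if_pos ha]
      exact (commutator_le_left _ _).trans (iterComm_le_gammaCoeff N k.succ_pos a)
    · obtain ⟨l, rfl⟩ : ∃ l, a = l + 1 := ⟨a - 1, by omega⟩
      rw [gammaCoeff, if_neg ha, Nat.add_sub_cancel, commutator_comm]
      exact (commutator_iterComm_gammaN_le N l 0).trans
        ((iterComm_antitone N (by omega)).trans (iterComm_le_gammaCoeff N k.succ_pos _))
  · have hb : gammaCoeff N 1 (b + 1) = gammaN N b := if_neg (by omega)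
    rw [hb]
    by_cases ha : a < k
    · rw [gammaCoeff, if_pos ha]
      exact (commutator_iterComm_gammaN_le N b a).trans (iterComm_le_gammaCoeff N k.succ_pos _)
    · rw [gammaCoeff, gammaCoeff, if_neg ha, if_neg (by omega)]
      exact (commutator_gammaN_gammaN_le N b (a - 1)).trans (gammaN_antitone N (by omega))

end Coefficients

section Delta

variable {G : Type*} [Group G] (d : ℕ)

theorem Delta_commutator (A B : Finset (Fin d)) (u v : G) :
    ⁅Delta d A u, Delta d B v⁆ = Delta d (A ∪ B) ⁅u, v⁆ := by
  funext C
  simp only [Delta, MonoidHom.coe_mk, OneHom.coe_mk, commutatorElement_def, Pi.mul_apply,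
    Pi.inv_apply, Finset.union_subset_iff]
  by_cases hA : A ⊆ C <;> by_cases hB : B ⊆ C <;> simp [hA, hB]

theorem map_Delta_union_commutator (A B : Finset (Fin d)) (H K : Subgroup G) :
    ⁅H, K⁆.map (Delta d (A ∪ B)) = ⁅H.map (Delta d A), K.map (Delta d B)⁆ := by
  rw [Subgroup.commutator_def, Subgroup.commutator_def, MonoidHom.map_closure]
  congr 1
  ext x
  simp only [Set.mem_image, mem_map]
  constructor
  · rintro ⟨_, ⟨u, hu, v, hv, rfl⟩, rfl⟩
    exact ⟨_, ⟨u, hu, rfl⟩, _, ⟨v, hv, rfl⟩, Delta_commutator d A B u v⟩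
  · rintro ⟨_, ⟨u, hu, rfl⟩, _, ⟨v, hv, rfl⟩, rfl⟩
    exact ⟨_, ⟨u, hu, v, hv, rfl⟩, (Delta_commutator d A B u v).symm⟩

variable (N : Subgroup G)

theorem map_Delta_le_GammaSub (k : ℕ) (A : Finset (Fin d)) :
    (gammaCoeff N k A.card).map (Delta d A) ≤ GammaSub d N k := by
  rw [GammaSub_eq_iSup]
  exact le_iSup (fun A : Finset (Fin d) => (gammaCoeff N k A.card).map (Delta d A)) A

variable [N.Normal] {k : ℕ} (hk : 0 < k)
include hk

theorem commutator_map_Delta_le_GammaSub (A B : Finset (Fin d)) :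
    ⁅(gammaCoeff N k A.card).map (Delta d A), (gammaCoeff N 1 B.card).map (Delta d B)⁆ ≤
      GammaSub d N (k + 1) := by
  rw [← map_Delta_union_commutator]
  refine (map_mono ?_).trans (map_Delta_le_GammaSub d N (k + 1) (A ∪ B))
  exact (commutator_gammaCoeff_le N hk _ _).trans
    (gammaCoeff_antitone N (k + 1) (Finset.card_union_le A B))

theorem GammaSub_one_le_normalizer :
    GammaSub d N 1 ≤ normalizer (GammaSub d N (k + 1) : Set (Finset (Fin d) → G)) := by
  rw [GammaSub_eq_iSup N d 1]
  refine iSup_le fun B => ?_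
  rw [GammaSub_eq_iSup N d (k + 1)]
  refine le_normalizer_iSup fun A => ?_
  rw [commutator_comm, ← GammaSub_eq_iSup]
  exact (commutator_mono (map_mono (gammaCoeff_anti_left N hk k.le_succ _)) le_rfl).trans
    (commutator_map_Delta_le_GammaSub d N hk A B)

theorem commutator_GammaSub_le :
    ⁅GammaSub d N k, GammaSub d N 1⁆ ≤ GammaSub d N (k + 1) := by
  have hnorm : ∀ k' (A : Finset (Fin d)), 0 < k' →
      (gammaCoeff N k' A.card).map (Delta d A) ≤ normalizer (GammaSub d N (k + 1) : Set _) :=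
    fun k' A hk' => (map_mono (gammaCoeff_anti_left N one_pos hk' _)).trans
      ((map_Delta_le_GammaSub d N 1 A).trans (GammaSub_one_le_normalizer d N hk))
  rw [GammaSub_eq_iSup N d k, GammaSub_eq_iSup N d 1]
  refine commutator_iSup_le (fun A => hnorm k A hk) fun A => ?_
  rw [commutator_comm]
  refine commutator_iSup_le (fun B => hnorm 1 B one_pos) fun B => ?_
  rw [commutator_comm]
  exact commutator_map_Delta_le_GammaSub d N hk A B

omit [N.Normal] in
theorem GammaSub_le_commutator (hperf : ⁅(⊤ : Subgroup G), (⊤ : Subgroup G)⁆ = ⊤) :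
    GammaSub d N (k + 1) ≤ ⁅GammaSub d N k, GammaSub d N 1⁆ := by
  rw [GammaSub_eq_iSup N d (k + 1)]
  refine iSup_le fun A => ?_
  induction A using Finset.induction_on with
  | empty =>
    have h₁ := map_Delta_le_GammaSub d N k ∅
    have h₂ := map_Delta_le_GammaSub d N 1 ∅
    rw [Finset.card_empty, gammaCoeff_zero N hk] at h₁
    rw [Finset.card_empty, gammaCoeff_zero N one_pos] at h₂
    rw [Finset.card_empty, gammaCoeff_zero N k.succ_pos, ← hperf, ← Finset.empty_union ∅,
      map_Delta_union_commutator]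
    exact commutator_mono h₁ h₂
  | insert i A hi _ =>
    have h₂ := map_Delta_le_GammaSub d N 1 {i}
    rw [Finset.card_singleton, gammaCoeff_one_one] at h₂
    rw [Finset.card_insert_of_notMem hi, gammaCoeff_succ_succ N hk, Finset.insert_eq,
      Finset.union_comm, map_Delta_union_commutator]
    exact commutator_mono (map_Delta_le_GammaSub d N k A) h₂

theorem commutator_GammaSub_GammaSub_one (hperf : ⁅(⊤ : Subgroup G), (⊤ : Subgroup G)⁆ = ⊤) :
    ⁅GammaSub d N k, GammaSub d N 1⁆ = GammaSub d N (k + 1) :=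
  le_antisymm (commutator_GammaSub_le d N hk) (GammaSub_le_commutator d N hk hperf)

end Delta

theorem gammaN_GammaSub_one_eq_GammaSub_general
    {G : Type*} [Group G] (hperf : ⁅(⊤ : Subgroup G), (⊤ : Subgroup G)⁆ = ⊤)
    (N : Subgroup G) [N.Normal] {d : ℕ}
    (k : ℕ) (hk1 : 1 ≤ k) :
    gammaN (GammaSub d N 1) (k - 1) = GammaSub d N k := by
  obtain ⟨m, rfl⟩ : ∃ m, k = m + 1 := ⟨k - 1, by omega⟩
  rw [Nat.add_sub_cancel]
  induction m with
  | zero => rfl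
  | succ m ih =>
    rw [gammaN, ih m.succ_pos, commutator_GammaSub_GammaSub_one d N m.succ_pos hperf]

/-- **Lemma (lcc).** If `G` is perfect then for `S = Γ₁(G,N)` and every
`k ∈ {1, …, d+1}` we have `γ_k(S) = Γ_k(G,N)`; here `γ_k(S)` is `gammaN S (k-1)`. -/
theorem gammaN_GammaSub_one_eq_GammaSub
    {G : Type*} [Group G] (hperf : ⁅(⊤ : Subgroup G), (⊤ : Subgroup G)⁆ = ⊤)
    (N : Subgroup G) [N.Normal] {d : ℕ} (hd : 0 < d)
    (k : ℕ) (hk1 : 1 ≤ k) (hk2 : k ≤ d + 1) :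
    gammaN (GammaSub d N 1) (k - 1) = GammaSub d N k :=
  gammaN_GammaSub_one_eq_GammaSub_general hperf N k hk1
end

section
/- With $\mathbb{F}=\mathbb{F}_4$ and $H$, $M$ the subgroups of $\mathrm{SL}_6(\mathbb{F})$ defined below, the commutator subgroup $[H,M]$ equals $M$. -/
/-- The group `SL₆(F)`, with rows and columns indexed by `Fin 3 × Fin 2`, so that
its elements can be viewed as `3 × 3` block matrices with `2 × 2` blocks. -/
abbrev SL6 (F : Type*) [Field F] [Fintype F] : Type _ :=
  Matrix.SpecialLinearGroup (Fin 3 × Fin 2) F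

/-- Assemble a `3 × 3` array of `2 × 2` blocks into a `6 × 6` matrix. -/
def blk3 {F : Type*} [Field F] (f : Fin 3 → Fin 3 → Matrix (Fin 2) (Fin 2) F) :
    Matrix (Fin 3 × Fin 2) (Fin 3 × Fin 2) F :=
  Matrix.of fun p q => f p.1 q.1 p.2 q.2

/-- The subgroup `H` of `SL₆(F)`: block diagonal matrices `diag(A, A, A)` with
`A ∈ SL₂(F)`. -/
def Hset (F : Type*) [Field F] [Fintype F] : Set (SL6 F) :=
  {X | ∃ A : Matrix.SpecialLinearGroup (Fin 2) F,
    (X : Matrix (Fin 3 × Fin 2) (Fin 3 × Fin 2) F) =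
      blk3 ![![(A : Matrix (Fin 2) (Fin 2) F), 0, 0],
              ![0, (A : Matrix (Fin 2) (Fin 2) F), 0],
              ![0, 0, (A : Matrix (Fin 2) (Fin 2) F)]]}

/-- The subgroup `M` of `SL₆(F)`: block upper unitriangular matrices with blocks
`B` (position (1,2)), `C` (position (2,3)) of trace `0` and an arbitrary block `D`
(position (1,3)). -/
def Mset (F : Type*) [Field F] [Fintype F] : Set (SL6 F) :=
  {X | ∃ B C D : Matrix (Fin 2) (Fin 2) F, B.trace = 0 ∧ C.trace = 0 ∧
    (X : Matrix (Fin 3 × Fin 2) (Fin 3 × Fin 2) F) =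
      blk3 ![![1, B, D], ![0, 1, C], ![0, 0, 1]]}

/-- The subgroup `N` of `SL₆(F)`: elements of `M` whose blocks in positions (1,2)
and (2,3) are scalar matrices `b•I` and `c•I`. -/
def Nset (F : Type*) [Field F] [Fintype F] : Set (SL6 F) :=
  {X | ∃ (b c : F) (D : Matrix (Fin 2) (Fin 2) F),
    (X : Matrix (Fin 3 × Fin 2) (Fin 3 × Fin 2) F) =
      blk3 ![![1, b • 1, D], ![0, 1, c • 1], ![0, 0, 1]]}

/-- The group `G = HM`, i.e. the subgroup of `SL₆(F)` generated by `H ∪ M`. -/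
def Gsub (F : Type*) [Field F] [Fintype F] : Subgroup (SL6 F) :=
  Subgroup.closure (Hset F ∪ Mset F)

/-!
Write `m(B, C, D)` for the block unitriangular matrix with blocks `B`, `C`, `D`, and `X̃ = A X A⁻¹`.
Conjugation by `diag(A, A, A)` sends `m(B, C, D)` to `m(B̃, C̃, D̃)` and preserves traces, so `H`
normalizes `M` and `[H, M] ≤ M`. Conversely,
`[diag(A, A, A), m(B, C, D)] = m(B̃ - B, C̃ - C, D̃ - D - (B̃ - B) C)` and
`m(B, C, D) = m(B, 0, 0) m(0, C, 0) m(0, 0, D - B C)`, so it suffices to produce each block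
separately. The differences `Ỹ - Y` (`A ∈ SL₂(F)`, `tr Y = 0`) additively generate all
trace-zero matrices as soon as `F` has an element `u` with `u² ∉ {0, 1}`, i.e. `|F| ≥ 4`: a
unipotent `A` gives the diagonal, `A = diag(u, u⁻¹)` the off-diagonal entries. This yields the
`B`- and `C`-blocks and the trace-zero `D`-blocks; a single commutator with `B` and `C` both
nonzero supplies a `D`-block of any prescribed trace.
-/

open Matrix
open scoped commutatorElement Kronecker MatrixGroups

section

variable {F : Type*} [Field F]

local notation:1024 "↑ₘ" A:1024 => ((A : SL(2, F)) : Matrix (Fin 2) (Fin 2) F)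

theorem blk3_mul (f g : Fin 3 → Fin 3 → Matrix (Fin 2) (Fin 2) F) :
    blk3 f * blk3 g = blk3 fun i j => ∑ k, f i k * g k j := by
  ext ⟨i, a⟩ ⟨j, b⟩
  simp [blk3, mul_apply, Fintype.sum_prod_type, Fin.sum_univ_two, Matrix.sum_apply]

theorem one_kronecker_mul_blk3_mul (P Q : Matrix (Fin 2) (Fin 2) F)
    (f : Fin 3 → Fin 3 → Matrix (Fin 2) (Fin 2) F) :
    (1 : Matrix (Fin 3) (Fin 3) F) ⊗ₖ P * blk3 f * (1 : Matrix (Fin 3) (Fin 3) F) ⊗ₖ Q =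
      blk3 fun i j => P * f i j * Q := by
  ext ⟨i, a⟩ ⟨j, b⟩
  simp [blk3, mul_apply, Fintype.sum_prod_type, one_apply, ite_mul]

theorem blk3_diagonal_eq_one_kronecker (P : Matrix (Fin 2) (Fin 2) F) :
    blk3 ![![P, 0, 0], ![0, P, 0], ![0, 0, P]] = (1 : Matrix (Fin 3) (Fin 3) F) ⊗ₖ P := by
  ext ⟨i, a⟩ ⟨j, b⟩
  fin_cases i <;> fin_cases j <;> simp only [blk3, of_apply, Fin.reduceFinMk, cons_val] <;> simp

theorem det_blk3_of_unitriangular {f : Fin 3 → Fin 3 → Matrix (Fin 2) (Fin 2) F}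
    (hlower : ∀ i j, j < i → f i j = 0) (hdiag : ∀ i, f i i = 1) : (blk3 f).det = 1 := by
  rw [← det_submatrix_equiv_self ofLex, det_of_isUpperTriangular]
  · simp [blk3, hdiag]
  · intro p q (hqp : q < p)
    change f (ofLex p).1 (ofLex q).1 (ofLex p).2 (ofLex q).2 = 0
    rcases Prod.Lex.lt_iff.mp hqp with h | ⟨h, hab⟩
    · rw [hlower _ _ h]
      rfl
    · rw [h, hdiag]
      exact one_apply_ne hab.ne'

theorem exists_ne_zero_sq_ne_one [Fintype F] (hF : 3 < Fintype.card F) :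
    ∃ u : F, u ≠ 0 ∧ u ^ 2 ≠ 1 := by
  by_contra! h
  have hroots : Nat.card Fˣ ≤ 2 :=
    (Nat.card_le_card_of_injective (fun v : Fˣ => (⟨v, (mem_rootsOfUnity' 2 v).mpr
      (h v v.ne_zero)⟩ : rootsOfUnity 2 F)) fun v w hvw => congrArg Subtype.val hvw).trans
      (card_rootsOfUnity F 2)
  rw [Nat.card_units, Nat.card_eq_fintype_card] at hroots
  omega

theorem trace_SL_conj (A : SL(2, F)) (Y : Matrix (Fin 2) (Fin 2) F) :
    (↑ₘA * Y * ↑ₘA⁻¹).trace = Y.trace := by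
  rw [trace_mul_cycle, ← Matrix.SpecialLinearGroup.coe_mul, inv_mul_cancel,
    Matrix.SpecialLinearGroup.coe_one, Matrix.one_mul]

theorem trace_SL_conj_sub (A : SL(2, F)) (Y : Matrix (Fin 2) (Fin 2) F) :
    (↑ₘA * Y * ↑ₘA⁻¹ - Y).trace = 0 := by
  rw [trace_sub, trace_SL_conj, sub_self]

theorem mem_of_trace_eq_zero_of_conj_sub_mem [Fintype F] (hF : 3 < Fintype.card F)
    {S : AddSubgroup (Matrix (Fin 2) (Fin 2) F)}
    (hS : ∀ (A : SL(2, F)) (Y : Matrix (Fin 2) (Fin 2) F), Y.trace = 0 →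
      ↑ₘA * Y * ↑ₘA⁻¹ - Y ∈ S)
    {X : Matrix (Fin 2) (Fin 2) F} (hX : X.trace = 0) : X ∈ S := by
  obtain ⟨u, hu0, hu⟩ := exists_ne_zero_sq_ne_one hF
  let U : SL(2, F) := ⟨!![1, 1; 0, 1], by simp⟩
  let T : SL(2, F) := ⟨!![u, 0; 0, u⁻¹], by simp [hu0]⟩
  let Y : Matrix (Fin 2) (Fin 2) F := !![0, 0; X 0 0, 0]
  let Z : Matrix (Fin 2) (Fin 2) F :=
    !![0, (X 0 0 + X 0 1) / (u ^ 2 - 1); X 1 0 / (u⁻¹ ^ 2 - 1), 0]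
  have hX' : X 1 1 = - X 0 0 := by rw [trace_fin_two] at hX; linear_combination hX
  have hUY : ↑ₘU * Y * ↑ₘU⁻¹ - Y = !![X 0 0, -X 0 0; 0, -X 0 0] := by
    rw [Matrix.SpecialLinearGroup.coe_inv]
    ext i j
    fin_cases i <;> fin_cases j <;> simp [U, Y, adjugate_fin_two_of]
  have hTZ : ↑ₘT * Z * ↑ₘT⁻¹ - Z = !![0, X 0 0 + X 0 1; X 1 0, 0] := by
    rw [Matrix.SpecialLinearGroup.coe_inv]
    ext i j
    fin_cases i <;> fin_cases j <;> simp [T, Z, adjugate_fin_two_of] <;> field_simp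
  have hsum : X = (↑ₘU * Y * ↑ₘU⁻¹ - Y) + (↑ₘT * Z * ↑ₘT⁻¹ - Z) := by
    rw [hUY, hTZ]
    ext i j
    fin_cases i <;> fin_cases j <;> simp [hX']
  rw [hsum]
  exact add_mem (hS U Y (by simp [Y, trace_fin_two])) (hS T Z (by simp [Z, trace_fin_two]))

variable [Fintype F]

def mElem (B C D : Matrix (Fin 2) (Fin 2) F) : SL6 F :=
  ⟨blk3 ![![1, B, D], ![0, 1, C], ![0, 0, 1]],
    det_blk3_of_unitriangular
      (by intro i j hji; fin_cases i <;> fin_cases j <;> first | rfl | simp at hji)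
      (by intro i; fin_cases i <;> rfl)⟩

theorem coe_mElem (B C D : Matrix (Fin 2) (Fin 2) F) :
    (mElem B C D : Matrix (Fin 3 × Fin 2) (Fin 3 × Fin 2) F) =
      blk3 ![![1, B, D], ![0, 1, C], ![0, 0, 1]] :=
  rfl

theorem mElem_mul (B C D B' C' D' : Matrix (Fin 2) (Fin 2) F) :
    mElem B C D * mElem B' C' D' = mElem (B + B') (C + C') (D + B * C' + D') := by
  apply Subtype.ext
  rw [Matrix.SpecialLinearGroup.coe_mul, coe_mElem, coe_mElem, coe_mElem, blk3_mul]
  refine congrArg blk3 (funext₂ fun i j => ?_)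
  fin_cases i <;> fin_cases j <;> simp [Fin.sum_univ_three] <;> abel

theorem mElem_zero : (mElem 0 0 0 : SL6 F) = 1 := by
  apply Subtype.ext
  rw [coe_mElem, Matrix.SpecialLinearGroup.coe_one, blk3_diagonal_eq_one_kronecker,
    one_kronecker_one]

theorem mElem_inv (B C D : Matrix (Fin 2) (Fin 2) F) :
    (mElem B C D)⁻¹ = mElem (-B) (-C) (B * C - D) := by
  rw [inv_eq_iff_mul_eq_one, mElem_mul, ← mElem_zero]
  congr 1
  · abel
  · abel
  · noncomm_ring

theorem mElem_eq_mul (B C D : Matrix (Fin 2) (Fin 2) F) :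
    mElem B C D = mElem B 0 0 * mElem 0 C 0 * mElem 0 0 (D - B * C) := by
  simp [mElem_mul]

theorem mem_Mset_iff {X : SL6 F} :
    X ∈ Mset F ↔ ∃ B C D : Matrix (Fin 2) (Fin 2) F,
      B.trace = 0 ∧ C.trace = 0 ∧ X = mElem B C D :=
  ⟨fun ⟨B, C, D, hB, hC, hX⟩ => ⟨B, C, D, hB, hC, Subtype.ext hX⟩,
    fun ⟨B, C, D, hB, hC, hX⟩ => ⟨B, C, D, hB, hC, hX ▸ rfl⟩⟩

def diagSL : SL(2, F) →* SL6 F where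
  toFun A := ⟨1 ⊗ₖ ↑ₘA, by simp [det_kronecker]⟩
  map_one' := by apply Subtype.ext; simp
  map_mul' A A' := by
    apply Subtype.ext
    change 1 ⊗ₖ (↑ₘA * ↑ₘA') = 1 ⊗ₖ ↑ₘA * 1 ⊗ₖ ↑ₘA'
    rw [← mul_kronecker_mul, one_mul]

theorem coe_diagSL (A : SL(2, F)) :
    (diagSL A : Matrix (Fin 3 × Fin 2) (Fin 3 × Fin 2) F) = 1 ⊗ₖ ↑ₘA :=
  rfl

theorem Hset_eq_range_diagSL : Hset F = Set.range diagSL := by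
  ext X
  refine exists_congr fun A => ?_
  rw [blk3_diagonal_eq_one_kronecker, eq_comm, ← coe_diagSL]
  exact Subtype.ext_iff.symm

theorem diagSL_mem_Hset (A : SL(2, F)) : diagSL A ∈ Hset F := by
  rw [Hset_eq_range_diagSL]
  exact Set.mem_range_self A

theorem closure_Hset : Subgroup.closure (Hset F) = (diagSL : SL(2, F) →* SL6 F).range := by
  rw [Hset_eq_range_diagSL, ← MonoidHom.coe_range, Subgroup.closure_eq]

theorem diagSL_mul_mElem_mul_inv (A : SL(2, F)) (B C D : Matrix (Fin 2) (Fin 2) F) :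
    diagSL A * mElem B C D * (diagSL A)⁻¹ =
      mElem (↑ₘA * B * ↑ₘA⁻¹) (↑ₘA * C * ↑ₘA⁻¹) (↑ₘA * D * ↑ₘA⁻¹) := by
  have hA : ↑ₘA * ↑ₘA⁻¹ = 1 := by
    rw [← Matrix.SpecialLinearGroup.coe_mul, mul_inv_cancel, Matrix.SpecialLinearGroup.coe_one]
  apply Subtype.ext
  rw [← map_inv, Matrix.SpecialLinearGroup.coe_mul, Matrix.SpecialLinearGroup.coe_mul,
    coe_diagSL, coe_diagSL, coe_mElem, coe_mElem, one_kronecker_mul_blk3_mul]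
  refine congrArg blk3 (funext₂ fun i j => ?_)
  fin_cases i <;> fin_cases j <;> simp [-Matrix.SpecialLinearGroup.coe_inv, hA]

theorem commutator_diagSL_mElem (A : SL(2, F)) (B C D : Matrix (Fin 2) (Fin 2) F) :
    ⁅diagSL A, mElem B C D⁆ =
      mElem (↑ₘA * B * ↑ₘA⁻¹ - B) (↑ₘA * C * ↑ₘA⁻¹ - C)
        (↑ₘA * D * ↑ₘA⁻¹ - D - (↑ₘA * B * ↑ₘA⁻¹ - B) * C) := by
  rw [commutatorElement_def, diagSL_mul_mElem_mul_inv, mElem_inv, mElem_mul]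
  congr 1
  · abel
  · abel
  · noncomm_ring

theorem mElem_mem_Mset {B C : Matrix (Fin 2) (Fin 2) F} (hB : B.trace = 0) (hC : C.trace = 0)
    (D : Matrix (Fin 2) (Fin 2) F) : mElem B C D ∈ Mset F :=
  mem_Mset_iff.mpr ⟨B, C, D, hB, hC, rfl⟩

def mElemB : Matrix (Fin 2) (Fin 2) F →+ Additive (SL6 F) :=
  AddMonoidHom.mk' (fun B => .ofMul (mElem B 0 0)) fun B B' => by
    rw [← ofMul_mul, mElem_mul]
    simp

def mElemC : Matrix (Fin 2) (Fin 2) F →+ Additive (SL6 F) :=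
  AddMonoidHom.mk' (fun C => .ofMul (mElem 0 C 0)) fun C C' => by
    rw [← ofMul_mul, mElem_mul]
    simp

def mElemD : Matrix (Fin 2) (Fin 2) F →+ Additive (SL6 F) :=
  AddMonoidHom.mk' (fun D => .ofMul (mElem 0 0 D)) fun D D' => by
    rw [← ofMul_mul, mElem_mul]
    simp

variable {K : Subgroup (SL6 F)}

theorem mElem_B_mem (hF : 3 < Fintype.card F)
    (hK : ∀ A : SL(2, F), ∀ m ∈ Mset F, ⁅diagSL A, m⁆ ∈ K)
    {B : Matrix (Fin 2) (Fin 2) F} (hB : B.trace = 0) : mElem B 0 0 ∈ K :=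
  mem_of_trace_eq_zero_of_conj_sub_mem (S := K.toAddSubgroup.comap mElemB) hF
    (fun A Y hY => by
      simpa [mElemB, commutator_diagSL_mElem] using hK A _ (mElem_mem_Mset hY (trace_zero _ _) 0))
    hB

theorem mElem_C_mem (hF : 3 < Fintype.card F)
    (hK : ∀ A : SL(2, F), ∀ m ∈ Mset F, ⁅diagSL A, m⁆ ∈ K)
    {C : Matrix (Fin 2) (Fin 2) F} (hC : C.trace = 0) : mElem 0 C 0 ∈ K :=
  mem_of_trace_eq_zero_of_conj_sub_mem (S := K.toAddSubgroup.comap mElemC) hF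
    (fun A Y hY => by
      simpa [mElemC, commutator_diagSL_mElem] using hK A _ (mElem_mem_Mset (trace_zero _ _) hY 0))
    hC

theorem mElem_D_mem_of_trace_eq_zero (hF : 3 < Fintype.card F)
    (hK : ∀ A : SL(2, F), ∀ m ∈ Mset F, ⁅diagSL A, m⁆ ∈ K)
    {D : Matrix (Fin 2) (Fin 2) F} (hD : D.trace = 0) : mElem 0 0 D ∈ K :=
  mem_of_trace_eq_zero_of_conj_sub_mem (S := K.toAddSubgroup.comap mElemD) hF
    (fun A Y _ => by
      simpa [mElemD, commutator_diagSL_mElem] using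
        hK A _ (mElem_mem_Mset (trace_zero _ _) (trace_zero _ _) Y))
    hD

/-- Modulo the `B`- and `C`-blocks, `⁅diagSL A, mElem B C 0⁆` has `D`-block `B C̃ - B̃ C̃`, of trace
`tr (B C̃) - tr (B C)`; for these `A`, `B`, `C` that trace is `t`. -/
theorem exists_trace_eq_mElem_D_mem (hF : 3 < Fintype.card F)
    (hK : ∀ A : SL(2, F), ∀ m ∈ Mset F, ⁅diagSL A, m⁆ ∈ K) (t : F) :
    ∃ E : Matrix (Fin 2) (Fin 2) F, E.trace = t ∧ mElem 0 0 E ∈ K := by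
  let A : SL(2, F) := ⟨!![0, 1; -1, 0], by simp⟩
  let B : Matrix (Fin 2) (Fin 2) F := !![0, -t; 0, 0]
  let C : Matrix (Fin 2) (Fin 2) F := !![0, 1; 0, 0]
  have hcomm := hK A _ (mElem_mem_Mset (B := B) (C := C) (by simp [B]) (by simp [C]) 0)
  rw [commutator_diagSL_mElem, mElem_eq_mul] at hcomm
  refine ⟨_, ?_, (K.mul_mem_cancel_left (mul_mem (mElem_B_mem hF hK (trace_SL_conj_sub A B))
    (mElem_C_mem hF hK (trace_SL_conj_sub A C)))).mp hcomm⟩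
  rw [Matrix.SpecialLinearGroup.coe_inv]
  simp [A, B, C, adjugate_fin_two_of, trace_fin_two]

theorem mElem_D_mem (hF : 3 < Fintype.card F)
    (hK : ∀ A : SL(2, F), ∀ m ∈ Mset F, ⁅diagSL A, m⁆ ∈ K) (D : Matrix (Fin 2) (Fin 2) F) :
    mElem 0 0 D ∈ K := by
  obtain ⟨E, hE, hEK⟩ := exists_trace_eq_mElem_D_mem hF hK D.trace
  have hDE : (D - E).trace = 0 := by rw [trace_sub, hE, sub_self]
  have hmem := mul_mem hEK (mElem_D_mem_of_trace_eq_zero hF hK hDE)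
  rwa [mElem_mul, zero_add, mul_zero, add_zero, add_sub_cancel] at hmem

theorem closure_Mset_le (hF : 3 < Fintype.card F)
    (hK : ∀ A : SL(2, F), ∀ m ∈ Mset F, ⁅diagSL A, m⁆ ∈ K) : Subgroup.closure (Mset F) ≤ K := by
  rw [Subgroup.closure_le]
  intro m hm
  obtain ⟨B, C, D, hB, hC, rfl⟩ := mem_Mset_iff.mp hm
  rw [mElem_eq_mul]
  exact mul_mem (mul_mem (mElem_B_mem hF hK hB) (mElem_C_mem hF hK hC)) (mElem_D_mem hF hK _)

theorem commutator_closure_Hset_closure_Mset_le :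
    ⁅Subgroup.closure (Hset F), Subgroup.closure (Mset F)⁆ ≤ Subgroup.closure (Mset F) := by
  rw [← Subgroup.le_normalizer_iff_commutator_le_right, Subgroup.le_normalizer_closure_iff,
    closure_Hset]
  rintro _ ⟨A, rfl⟩ m hm
  obtain ⟨B, C, D, hB, hC, rfl⟩ := mem_Mset_iff.mp hm
  rw [diagSL_mul_mElem_mul_inv]
  exact Subgroup.subset_closure
    (mElem_mem_Mset ((trace_SL_conj A B).trans hB) ((trace_SL_conj A C).trans hC) _)

end

/-- **Claim (15a).** The commutator subgroup `[H, M]` equals `M` (as subgroups of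
`SL₆(𝔽₄)`, i.e. as subgroups generated by the corresponding sets). -/
theorem commutator_Hset_Mset_eq_Mset
    (F : Type*) [Field F] [Fintype F] (hF : Fintype.card F = 4) :
    ⁅Subgroup.closure (Hset F), Subgroup.closure (Mset F)⁆ =
      Subgroup.closure (Mset F) :=
  le_antisymm commutator_closure_Hset_closure_Mset_le <|
    closure_Mset_le (by omega) fun A _ hm => Subgroup.commutator_mem_commutator
      (Subgroup.subset_closure (diagSL_mem_Hset A)) (Subgroup.subset_closure hm)
end
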